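/- Fix a real number q ∈ (0,1], take p = 1, and let 𝔹 : ℕ → ℝ. Suppose P : ℕ → ℝ satisfies P(0) = 𝔹(0) and, for k ≥ 1, P(k) = ((k−1)/(1+q+k)) P(k−1) + (1+q)𝔹(k)/(1+q+k). Define F(k) = 1 − ∑_{i=0}^{k−1} P(i). Then for every k ≥ 1, F(k) = 1 − 𝔹(0) − ∑_{i=1}^{k−1} ∑_{j=1}^{i} ( (1+q) B(i, q+2) / ((j+q+1) B(j, q+2)) ) · 𝔹(j), where B(x,y) = Γ(x)Γ(y)/Γ(x+y) denotes the Beta function. -/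

import Mathlib

/-!
Since `B(n+1, q+2) = n/(n+q+2) · B(n, q+2)`, the factor `(k-1)/(1+q+k)` of the recurrence is
the ratio `B(k, q+2)/B(k-1, q+2)`, so unrolling the recurrence gives, for `i ≥ 1`,
`P(i) = ∑_{j=1}^{i} (1+q) B(i,q+2) / ((j+q+1) B(j,q+2)) · 𝔹(j)`.
Summing over `1 ≤ i ≤ k-1` and adding `P(0) = 𝔹(0)` gives the closed form of `F(k)`.
-/

/-- The Beta function `B(x,y) = Γ(x)Γ(y)/Γ(x+y)`. -/
noncomputable def betaFn (x y : ℝ) : ℝ :=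
  Real.Gamma x * Real.Gamma y / Real.Gamma (x + y)

open Finset

lemma betaFn_add_one {x y : ℝ} (hx : x ≠ 0) (hxy : x + y ≠ 0) :
    betaFn (x + 1) y = x / (x + y) * betaFn x y := by
  unfold betaFn
  rw [add_right_comm, Real.Gamma_add_one hx, Real.Gamma_add_one hxy]
  field_simp

lemma betaFn_pos {x y : ℝ} (hx : 0 < x) (hy : 0 < y) : 0 < betaFn x y := by
  unfold betaFn
  have := Real.Gamma_pos_of_pos hx
  have := Real.Gamma_pos_of_pos hy
  have := Real.Gamma_pos_of_pos (add_pos hx hy)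
  positivity

/-- The coefficient of `𝔹(j)` in `P(i)`. -/
noncomputable def attachmentWeight (q : ℝ) (i j : ℕ) : ℝ :=
  (1 + q) * betaFn i (q + 2) / ((j + q + 1) * betaFn j (q + 2))

section

variable {q : ℝ} (hq : 0 < q)
include hq

lemma attachmentWeight_succ_left {n : ℕ} (hn : n ≠ 0) (j : ℕ) :
    attachmentWeight q (n + 1) j = n / (1 + q + (n + 1)) * attachmentWeight q n j := by
  have hB : betaFn ((n : ℝ) + 1) (q + 2) = n / (1 + q + (n + 1)) * betaFn n (q + 2) := by
    rw [betaFn_add_one (Nat.cast_ne_zero.mpr hn) (by positivity)]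
    ring_nf
  unfold attachmentWeight
  rw [Nat.cast_succ, hB]
  ring

lemma attachmentWeight_self {j : ℕ} (hj : j ≠ 0) :
    attachmentWeight q j j = (1 + q) / (1 + q + j) := by
  have hB : betaFn j (q + 2) ≠ 0 :=
    (betaFn_pos (Nat.cast_pos.mpr (Nat.pos_of_ne_zero hj)) (by positivity)).ne'
  unfold attachmentWeight
  field_simp
  ring

lemma eq_sum_attachmentWeight_of_rec {B P : ℕ → ℝ}
    (hrec : ∀ k : ℕ, 1 ≤ k →
      P k = ((k : ℝ) - 1) / (1 + q + k) * P (k - 1) + (1 + q) * B k / (1 + q + k))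
    {i : ℕ} (hi : 1 ≤ i) :
    P i = ∑ j ∈ Icc 1 i, attachmentWeight q i j * B j := by
  induction i, hi using Nat.le_induction with
  | base =>
    rw [hrec 1 le_rfl, Icc_self, sum_singleton, attachmentWeight_self hq one_ne_zero]
    push_cast
    ring
  | succ n hn ih =>
    have hn0 : n ≠ 0 := Nat.one_le_iff_ne_zero.mp hn
    rw [hrec (n + 1) (Nat.le_add_left 1 n), Nat.add_sub_cancel, ih,
      sum_Icc_succ_top (Nat.le_add_left 1 n), attachmentWeight_self hq (Nat.succ_ne_zero n),
      mul_sum]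
    simp_rw [attachmentWeight_succ_left hq hn0, mul_assoc]
    push_cast [add_sub_cancel_right]
    ring

end

theorem ccdf_p_one_general (q : ℝ) (hq0 : 0 < q) (B P : ℕ → ℝ)
    (h0 : P 0 = B 0)
    (hrec : ∀ k : ℕ, 1 ≤ k →
      P k = ((k : ℝ) - 1) / (1 + q + k) * P (k - 1) + (1 + q) * B k / (1 + q + k))
    (F : ℕ → ℝ) (hF : ∀ k : ℕ, F k = 1 - ∑ i ∈ Finset.range k, P i) :
    ∀ k : ℕ, 1 ≤ k →
      F k = 1 - B 0 -
        ∑ i ∈ Finset.Icc 1 (k - 1), ∑ j ∈ Finset.Icc 1 i,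
          (1 + q) * betaFn (i : ℝ) (q + 2) /
              (((j : ℝ) + q + 1) * betaFn (j : ℝ) (q + 2)) * B j := by
  intro k hk
  obtain ⟨m, rfl⟩ := Nat.exists_eq_add_of_le' hk
  have hP : ∀ i ∈ Icc 1 m, P i = ∑ j ∈ Icc 1 i, attachmentWeight q i j * B j :=
    fun i hi => eq_sum_attachmentWeight_of_rec hq0 hrec (mem_Icc.mp hi).1
  rw [hF, range_eq_Ico, sum_eq_sum_Ico_succ_bot (Nat.add_one_pos m), zero_add,
    Ico_add_one_right_eq_Icc, Nat.add_sub_cancel, h0, sum_congr rfl hP]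
  simp only [attachmentWeight]
  ring

/-- Closed form of the complementary cumulative in-degree distribution for
`p = 1` (pure preferential attachment): with `P` satisfying the limit recurrence
and `F k = 1 - ∑_{i=0}^{k-1} P i`, for every `k ≥ 1`,
`F k = 1 - 𝔹(0) - ∑_{i=1}^{k-1} ∑_{j=1}^{i}
  ((1+q)B(i,q+2)/((j+q+1)B(j,q+2))) 𝔹(j)`. -/
theorem ccdf_p_one (q : ℝ) (hq0 : 0 < q) (hq1 : q ≤ 1) (B P : ℕ → ℝ)
    (h0 : P 0 = B 0)
    (hrec : ∀ k : ℕ, 1 ≤ k →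
      P k = ((k : ℝ) - 1) / (1 + q + k) * P (k - 1) + (1 + q) * B k / (1 + q + k))
    (F : ℕ → ℝ) (hF : ∀ k : ℕ, F k = 1 - ∑ i ∈ Finset.range k, P i) :
    ∀ k : ℕ, 1 ≤ k →
      F k = 1 - B 0 -
        ∑ i ∈ Finset.Icc 1 (k - 1), ∑ j ∈ Finset.Icc 1 i,
          (1 + q) * betaFn (i : ℝ) (q + 2) /
              (((j : ℝ) + q + 1) * betaFn (j : ℝ) (q + 2)) * B j :=
  ccdf_p_one_general q hq0 B P h0 hrec F hF
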